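/- Let m ≥ 1, 0 < θ < 1, γ > 1, and let A, D be invertible m×m real matrices and B, C be m×m matrices with ‖A^{-1}‖ ≤ 1/(θγ) and ‖B‖ + ‖C‖ + ‖D^{-1}‖ ≤ 1/θ (Frobenius norms). Then there exists γ₁(m) depending only on m such that if γ ≥ γ₁(m)/θ⁴, the Schur complement D − C A^{-1} B is invertible and ‖(D − C A^{-1} B)^{-1}‖ ≤ 2/θ. -/
import Mathlib

open Matrix

/-- Frobenius norm of a square real matrix. -/
noncomputable def frob {m : ℕ} (M : Matrix (Fin m) (Fin m) ℝ) : ℝ :=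
  Real.sqrt (∑ i, ∑ j, (M i j) ^ 2)

attribute [local instance] Matrix.frobeniusNormedAddCommGroup Matrix.frobeniusNormedRing
  Matrix.frobeniusNormedSpace

lemma frob_eq_norm {m : ℕ} (M : Matrix (Fin m) (Fin m) ℝ) : frob M = ‖M‖ := by
  rw [Matrix.frobenius_norm_def, frob, Real.sqrt_eq_rpow]
  congr 1
  refine Finset.sum_congr rfl fun i _ => Finset.sum_congr rfl fun j _ => ?_
  rw [Real.rpow_two, Real.norm_eq_abs, sq_abs]

lemma norm_one_mat {m : ℕ} : ‖(1 : Matrix (Fin m) (Fin m) ℝ)‖ = Real.sqrt m := by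
  rw [← frob_eq_norm, frob]
  congr 1
  have h : ∀ i : Fin m, ∑ j, ((1 : Matrix (Fin m) (Fin m) ℝ) i j) ^ 2 = 1 := by
    intro i
    simp [Matrix.one_apply, apply_ite (· ^ 2)]
  simp [h]

set_option maxHeartbeats 4000000 in
theorem stmt_4 (m : ℕ) (hm : 1 ≤ m) :
    ∃ γ₁ : ℝ, 0 < γ₁ ∧
      ∀ (θ γ : ℝ) (A B C D : Matrix (Fin m) (Fin m) ℝ),
        0 < θ → θ < 1 → 1 < γ → IsUnit A → IsUnit D →
        frob A⁻¹ ≤ 1 / (θ * γ) → frob B + frob C + frob D⁻¹ ≤ 1 / θ →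
        γ₁ / θ ^ 4 ≤ γ →
        IsUnit (D - C * A⁻¹ * B) ∧ frob (D - C * A⁻¹ * B)⁻¹ ≤ 2 / θ := by
  haveI : CompleteSpace (Matrix (Fin m) (Fin m) ℝ) := FiniteDimensional.complete ℝ _
  have hsm : (1 : ℝ) ≤ Real.sqrt m := by
    rw [show (1:ℝ) = Real.sqrt 1 by simp]
    exact Real.sqrt_le_sqrt (by exact_mod_cast hm)
  refine ⟨2 * Real.sqrt m + 2, by linarith, ?_⟩
  intro θ γ A B C D hθ hθ1 hγ hA hD hAinv hBCD hγ1
  simp only [frob_eq_norm] at hAinv hBCD ⊢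
  set E : Matrix (Fin m) (Fin m) ℝ := D⁻¹ * C * A⁻¹ * B with hEdef
  have hBn : (0:ℝ) ≤ ‖B‖ := norm_nonneg _
  have hCn : (0:ℝ) ≤ ‖C‖ := norm_nonneg _
  have hDn : (0:ℝ) ≤ ‖D⁻¹‖ := norm_nonneg _
  have hAn : (0:ℝ) ≤ ‖A⁻¹‖ := norm_nonneg _
  have hB1 : ‖B‖ ≤ 1 / θ := by linarith
  have hC1 : ‖C‖ ≤ 1 / θ := by linarith
  have hD1 : ‖D⁻¹‖ ≤ 1 / θ := by linarith
  have hγ0 : (0:ℝ) < γ := by linarith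
  -- bound on ‖E‖
  have hE1 : ‖E‖ ≤ ‖D⁻¹‖ * ‖C‖ * ‖A⁻¹‖ * ‖B‖ := by
    calc ‖E‖ ≤ ‖D⁻¹ * C * A⁻¹‖ * ‖B‖ := norm_mul_le _ _
    _ ≤ ‖D⁻¹ * C‖ * ‖A⁻¹‖ * ‖B‖ := by
        gcongr; exact norm_mul_le _ _
    _ ≤ ‖D⁻¹‖ * ‖C‖ * ‖A⁻¹‖ * ‖B‖ := by
        gcongr; exact norm_mul_le _ _
  have hE2 : ‖E‖ ≤ 1 / (θ ^ 4 * γ) := by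
    have : ‖D⁻¹‖ * ‖C‖ * ‖A⁻¹‖ * ‖B‖ ≤ (1/θ) * (1/θ) * (1/(θ*γ)) * (1/θ) := by
      gcongr
    calc ‖E‖ ≤ (1/θ) * (1/θ) * (1/(θ*γ)) * (1/θ) := le_trans hE1 this
    _ = 1 / (θ ^ 4 * γ) := by field_simp
  have hθ4 : (0:ℝ) < θ ^ 4 := by positivity
  have hγbig : 2 * Real.sqrt m + 2 ≤ θ ^ 4 * γ := by
    rw [div_le_iff₀ hθ4] at hγ1; linarith [hγ1]
  have hE3 : ‖E‖ ≤ 1 / (2 * Real.sqrt m + 2) := by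
    refine le_trans hE2 ?_
    apply one_div_le_one_div_of_le (by linarith) hγbig
  have hElt : ‖E‖ < 1 := by
    refine lt_of_le_of_lt hE3 ?_
    rw [div_lt_one (by linarith)]; linarith
  have hEn : (0:ℝ) ≤ ‖E‖ := norm_nonneg _
  -- invertibility
  have hu : IsUnit (1 - E) := (Units.oneSub E hElt).isUnit
  have hDD : D * D⁻¹ = 1 := Matrix.mul_nonsing_inv D ((Matrix.isUnit_iff_isUnit_det D).mp hD)
  have hS : D - C * A⁻¹ * B = D * (1 - E) := by
    rw [mul_sub, mul_one, hEdef]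
    congr 1
    symm
    calc D * (D⁻¹ * C * A⁻¹ * B) = (D * D⁻¹) * (C * A⁻¹ * B) := by
          simp only [Matrix.mul_assoc]
    _ = C * A⁻¹ * B := by rw [hDD, one_mul]
  have hSu : IsUnit (D - C * A⁻¹ * B) := by rw [hS]; exact hD.mul hu
  refine ⟨hSu, ?_⟩
  -- inverse formula
  have hFmul : (1 - E)⁻¹ * (1 - E) = 1 :=
    Matrix.nonsing_inv_mul _ ((Matrix.isUnit_iff_isUnit_det _).mp hu)
  set F : Matrix (Fin m) (Fin m) ℝ := (1 - E)⁻¹ with hFdef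
  have hFeq : F = 1 + F * E := by
    have := hFmul
    rw [mul_sub, mul_one] at this
    rw [hFdef]
    linear_combination (norm := abel) this
  have hSinv : (D - C * A⁻¹ * B)⁻¹ = D⁻¹ + F * E * D⁻¹ := by
    rw [hS, Matrix.mul_inv_rev, ← hFdef]
    nth_rewrite 1 [hFeq]
    rw [add_mul, one_mul, Matrix.mul_assoc]
  -- norm bounds
  have hFn : ‖F‖ ≤ Real.sqrt m + ‖F‖ * ‖E‖ := by
    calc ‖F‖ = ‖(1 : Matrix (Fin m) (Fin m) ℝ) + F * E‖ := by rw [← hFeq]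
    _ ≤ ‖(1 : Matrix (Fin m) (Fin m) ℝ)‖ + ‖F * E‖ := norm_add_le _ _
    _ ≤ Real.sqrt m + ‖F‖ * ‖E‖ := by rw [norm_one_mat]; gcongr; exact norm_mul_le _ _
  have hFnn : (0:ℝ) ≤ ‖F‖ := norm_nonneg _
  have hkey : ‖F‖ * ‖E‖ ≤ 1 := by
    have hse : Real.sqrt m * ‖E‖ + ‖E‖ ≤ 1 := by
      have := mul_le_mul_of_nonneg_left hE3 (by linarith : (0:ℝ) ≤ Real.sqrt m + 1)
      have h2 : (Real.sqrt m + 1) * (1 / (2 * Real.sqrt m + 2)) = 1/2 := by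
        field_simp
      nlinarith [this]
    nlinarith [hFn, hEn, hElt, hFnn]
  calc ‖(D - C * A⁻¹ * B)⁻¹‖ = ‖D⁻¹ + F * E * D⁻¹‖ := by rw [hSinv]
  _ ≤ ‖D⁻¹‖ + ‖F * E * D⁻¹‖ := norm_add_le _ _
  _ ≤ ‖D⁻¹‖ + ‖F‖ * ‖E‖ * ‖D⁻¹‖ := by
      gcongr
      calc ‖F * E * D⁻¹‖ ≤ ‖F * E‖ * ‖D⁻¹‖ := norm_mul_le _ _
      _ ≤ ‖F‖ * ‖E‖ * ‖D⁻¹‖ := by gcongr; exact norm_mul_le _ _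
  _ ≤ ‖D⁻¹‖ + 1 * ‖D⁻¹‖ := by
      have := mul_le_mul_of_nonneg_right hkey hDn
      linarith
  _ = 2 * ‖D⁻¹‖ := by ring
  _ ≤ 2 / θ := by
      have h2 : 2 * (1 / θ) = 2 / θ := by ring
      nlinarith [hD1, h2]
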